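/- Let m > 1, let a, M, Λ > 0 with a ≤ Λ, and let H : ℝ^d → ℝ be a convex function satisfying a·|p|^m − M ≤ H(p) ≤ Λ(|p|^m + 1) for all p. Let 1 < τ ≤ 3/2. Then there exist constants c > 0 and C > 0 (depending only on m, a, M, Λ) and a choice of β ∈ (0, 1/2) such that for every p ∈ ℝ^d, (1/τ)·H(τ·p) − H(p) ≥ (τ−1)·(c·|p|^m − C). -/

import Mathlib

/-!
Write `p` as the convex combination `λ • (β • p) + (1 - λ) • (τ • p)` with `λ = (τ - 1) / (τ - β)`.
Convexity then bounds `H (τ • p) / τ - H p` below by `(τ - 1) / (τ (1 - β))` times the "good term"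
`β H p - H (β • p)`. By the growth bounds the good term is at least `(a β - Λ β ^ m) ‖p‖ ^ m - (M + Λ)`,
and since `m > 1`, for small `β` the power `Λ β ^ m` is absorbed into `a β / 2`. As
`τ (1 - β) ∈ [1/2, 3/2]`, the constants `c = a β / 3` and `C = 2 (M + Λ)` then work for every
`τ ∈ (1, 3/2]`.
-/

open Set Filter Topology

theorem ConvexOn.sub_mul_apply_le_of_lt_one_lt {E : Type*} [AddCommGroup E] [Module ℝ E]
    {f : E → ℝ} (hf : ConvexOn ℝ univ f) {β τ : ℝ} (hβ : β < 1) (hτ : 1 < τ) (x : E) :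
    (τ - β) * f x ≤ (τ - 1) * f (β • x) + (1 - β) * f (τ • x) := by
  have hline : ConvexOn ℝ univ (fun s : ℝ => f (s • x)) :=
    hf.comp_linearMap (LinearMap.toSpanSingleton ℝ E x)
  simpa using hline.secant_mono_aux1 (mem_univ β) (mem_univ τ) hβ hτ

theorem ConvexOn.mul_sub_apply_smul_le {E : Type*} [AddCommGroup E] [Module ℝ E]
    {f : E → ℝ} (hf : ConvexOn ℝ univ f) {β τ : ℝ} (hβ : β < 1) (hτ : 1 < τ) (x : E) :
    (τ - 1) / (τ * (1 - β)) * (β * f x - f (β • x)) ≤ 1 / τ * f (τ • x) - f x := by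
  have h1β : 0 < 1 - β := by linarith
  have hτ0 : 0 < τ := by linarith
  have key : (τ - 1) * (β * f x - f (β • x)) ≤ (1 - β) * (f (τ • x) - τ * f x) := by
    linear_combination hf.sub_mul_apply_le_of_lt_one_lt hβ hτ x
  rw [show 1 / τ * f (τ • x) - f x = (1 - β) * (f (τ • x) - τ * f x) / (τ * (1 - β)) by
    field_simp, div_mul_eq_mul_div]
  gcongr

theorem exists_mem_Ioo_mul_rpow_le {m ε : ℝ} (hm : 1 < m) (hε : 0 < ε) (Λ : ℝ) :
    ∃ β ∈ Ioo (0 : ℝ) (1 / 2), Λ * β ^ m ≤ ε * β := by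
  have hlim : Tendsto (fun β : ℝ => Λ * β ^ (m - 1)) (𝓝[>] 0) (𝓝 0) := by
    have := ((Real.continuousAt_rpow_const 0 (m - 1) (Or.inr (by linarith))).tendsto.const_mul Λ)
    rw [Real.zero_rpow (by linarith), mul_zero] at this
    exact this.mono_left nhdsWithin_le_nhds
  have hsmall : ∀ᶠ β in 𝓝[>] (0 : ℝ), β ∈ Ioo (0 : ℝ) (1 / 2) ∧ Λ * β ^ (m - 1) < ε :=
    Eventually.and (Ioo_mem_nhdsGT (by norm_num : (0 : ℝ) < 1 / 2)) (hlim.eventually (gt_mem_nhds hε))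
  obtain ⟨β, hβ, hβsmall⟩ := hsmall.exists
  refine ⟨β, hβ, ?_⟩
  rw [Real.rpow_sub_one hβ.1.ne', mul_div_assoc', div_lt_iff₀ hβ.1] at hβsmall
  exact hβsmall.le

theorem mul_apply_sub_apply_smul_ge {E : Type*} [NormedAddCommGroup E] [NormedSpace ℝ E]
    {H : E → ℝ} {m a M Λ β : ℝ} (hM : 0 ≤ M)
    (hlow : ∀ p, a * ‖p‖ ^ m - M ≤ H p) (hup : ∀ p, H p ≤ Λ * (‖p‖ ^ m + 1))
    (hβ : β ∈ Ioc (0 : ℝ) 1) (hβΛ : Λ * β ^ m ≤ a / 2 * β) (p : E) :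
    a * β / 2 * ‖p‖ ^ m - (M + Λ) ≤ β * H p - H (β • p) := by
  have hnorm : ‖β • p‖ ^ m = β ^ m * ‖p‖ ^ m := by
    rw [norm_smul, Real.norm_of_nonneg hβ.1.le, Real.mul_rpow hβ.1.le (norm_nonneg p)]
  have hupβ := hup (β • p)
  rw [hnorm] at hupβ
  nlinarith [mul_le_mul_of_nonneg_right hβΛ (Real.rpow_nonneg (norm_nonneg p) m),
    mul_le_mul_of_nonneg_left (hlow p) hβ.1.le, mul_le_of_le_one_left hM hβ.2]

theorem exists_forall_inv_mul_apply_smul_sub_apply_ge {E : Type*} [NormedAddCommGroup E]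
    [NormedSpace ℝ E] {H : E → ℝ} {m a M Λ : ℝ} (hm : 1 < m) (ha : 0 < a) (hM : 0 < M)
    (hΛ : 0 < Λ) (hH : ConvexOn ℝ univ H)
    (hlow : ∀ p, a * ‖p‖ ^ m - M ≤ H p) (hup : ∀ p, H p ≤ Λ * (‖p‖ ^ m + 1)) :
    ∃ c > 0, ∃ C > 0, ∃ β ∈ Ioo (0 : ℝ) (1 / 2), ∀ τ ∈ Ioc (1 : ℝ) (3 / 2), ∀ p : E,
      1 / τ * H (τ • p) - H p ≥ (τ - 1) * (c * ‖p‖ ^ m - C) := by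
  obtain ⟨β, hβ, hβΛ⟩ := exists_mem_Ioo_mul_rpow_le hm (half_pos ha) Λ
  refine ⟨a * β / 3, by positivity [hβ.1], 2 * (M + Λ), by positivity, β, hβ, fun τ hτ p => ?_⟩
  have hgood := mul_apply_sub_apply_smul_ge hM.le hlow hup ⟨hβ.1, by linarith [hβ.2]⟩ hβΛ p
  have hs : 1 / 2 ≤ τ * (1 - β) ∧ τ * (1 - β) ≤ 3 / 2 := by
    constructor <;> nlinarith [hβ.1, hβ.2, hτ.1, hτ.2]
  have ht := Real.rpow_nonneg (norm_nonneg p) m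
  have hweights :
      0 ≤ a * β * ‖p‖ ^ m * (1 / 2 - τ * (1 - β) / 3) + (M + Λ) * (2 * (τ * (1 - β)) - 1) := by
    have := hβ.1
    apply add_nonneg <;> apply mul_nonneg <;> first | positivity | linarith
  calc (τ - 1) * (a * β / 3 * ‖p‖ ^ m - 2 * (M + Λ))
      ≤ (τ - 1) / (τ * (1 - β)) * (a * β / 2 * ‖p‖ ^ m - (M + Λ)) := by
        rw [div_mul_eq_mul_div (τ - 1), le_div_iff₀ (by linarith)]
        nlinarith [mul_nonneg (sub_nonneg.2 hτ.1.le) hweights]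
    _ ≤ (τ - 1) / (τ * (1 - β)) * (β * H p - H (β • p)) :=
        mul_le_mul_of_nonneg_left hgood (div_nonneg (by linarith [hτ.1]) (by linarith))
    _ ≤ 1 / τ * H (τ • p) - H p := hH.mul_sub_apply_smul_le (by linarith [hβ.2]) hτ.1 p

theorem stmt_3_general (d : ℕ) (m a M Λ : ℝ) (hm : 1 < m) (ha : 0 < a) (hM : 0 < M)
    (hΛ : 0 < Λ)
    (H : EuclideanSpace ℝ (Fin d) → ℝ) (hH : ConvexOn ℝ Set.univ H)
    (hlow : ∀ p, a * ‖p‖ ^ m - M ≤ H p)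
    (hup : ∀ p, H p ≤ Λ * (‖p‖ ^ m + 1))
    (τ : ℝ) (hτ1 : 1 < τ) (hτ2 : τ ≤ 3 / 2) :
    ∃ c > 0, ∃ C > 0, ∃ β ∈ Set.Ioo (0 : ℝ) (1 / 2),
      ∀ p : EuclideanSpace ℝ (Fin d),
        (1 / τ) * H (τ • p) - H p ≥ (τ - 1) * (c * ‖p‖ ^ m - C) := by
  obtain ⟨c, hc, C, hC, β, hβ, hbound⟩ :=
    exists_forall_inv_mul_apply_smul_sub_apply_ge hm ha hM hΛ hH hlow hup
  exact ⟨c, hc, C, hC, β, hβ, hbound τ ⟨hτ1, hτ2⟩⟩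

theorem stmt_3 (d : ℕ) (m a M Λ : ℝ) (hm : 1 < m) (ha : 0 < a) (hM : 0 < M)
    (hΛ : 0 < Λ) (haΛ : a ≤ Λ)
    (H : EuclideanSpace ℝ (Fin d) → ℝ) (hH : ConvexOn ℝ Set.univ H)
    (hlow : ∀ p, a * ‖p‖ ^ m - M ≤ H p)
    (hup : ∀ p, H p ≤ Λ * (‖p‖ ^ m + 1))
    (τ : ℝ) (hτ1 : 1 < τ) (hτ2 : τ ≤ 3 / 2) :
    ∃ c > 0, ∃ C > 0, ∃ β ∈ Set.Ioo (0 : ℝ) (1 / 2),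
      ∀ p : EuclideanSpace ℝ (Fin d),
        (1 / τ) * H (τ • p) - H p ≥ (τ - 1) * (c * ‖p‖ ^ m - C) :=
  stmt_3_general d m a M Λ hm ha hM hΛ H hH hlow hup τ hτ1 hτ2
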